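/- arXiv:1901.09789 — 2 statements merged into one kernel-verified Lean document; each statement's English description precedes it below -/
import Mathlib

section
/- For every integer m ≥ 2, let P be the set of prime numbers p with p ≤ m and let n = Σ_{p ∈ P} (p + 1). Then there exist a connected finite simple graph G on n vertices, a maximum delay vector dt (not necessarily constant), and a configuration y of the conjunctive network with firing memory associated to G and dt such that y is periodic and its minimal period is at least Π_{p ∈ P} p. -/
open Classical in
/-- The conjunctive network on a finite simple graph `G`:
`F(x)_i = ⋀_{j adjacent to i} x_j`. -/
noncomputable def conjNet {V : Type*} [Fintype V] (G : SimpleGraph V)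
    (x : V → Bool) : V → Bool :=
  fun i => if ∀ j, G.Adj i j → x j = true then true else false

/-- One step of the conjunctive network with firing memory on `G` with
maximum delays `dt`.  A configuration assigns to each node a pair
`(xᵢ, Δᵢ)` of a Boolean state and a delay. -/
noncomputable def fmStep {V : Type*} [Fintype V] (G : SimpleGraph V) (dt : V → ℕ)
    (y : V → Bool × ℕ) : V → Bool × ℕ :=
  fun i =>
    let f := conjNet G (fun j => (y j).1) i
    let d : ℕ := if f = true then dt i else (y i).2 - 1
    (if 1 ≤ d then true else f, d)

/-!
For each prime `p ≤ m` take a clique `c₀, …, c_{p-1}` and a pendant vertex attached to `c₀`; the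
pendants of all blocks are joined into one clique. Pendants get maximum delay `p`, clique vertices
`p - 1`. Start with clique delays `Δ(cᵢ) = i` and pendant delay `p`.

If all maximum delays are positive, `xᵢ = [Δᵢ ≥ 1]` holds after every step, so the dynamics can be
read off the delays. Pendants keep `Δ ≥ p - 1 ≥ 1`, so they never block a neighbour. In a clique
exactly one vertex has delay `0` (the hole); a clique vertex fires iff all the others are on, i.e.
iff it is the hole, so the hole refills to `p - 1` while every other delay drops by one: at time
`t` the hole is `c_{t mod p}`. Hence block `p` has period exactly `p`, and the minimal period of
the whole configuration is the lcm of the primes, their product.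
-/

theorem ZMod.val_sub_one {n : ℕ} [NeZero n] (a : ZMod n) :
    (a - 1).val = if a = 0 then n - 1 else a.val - 1 := by
  split_ifs with ha
  · obtain ⟨k, rfl⟩ := Nat.exists_eq_add_one_of_ne_zero (NeZero.ne n)
    simp [ha, ZMod.val_neg_one]
  · have hn : 1 < n := by
      by_contra! hn
      obtain rfl : n = 1 := le_antisymm hn (NeZero.one_le)
      exact ha (Subsingleton.elim a 0)
    have : Fact (1 < n) := ⟨hn⟩
    have hval : (1 : ZMod n).val ≤ a.val := by
      rw [ZMod.val_one]
      exact Nat.one_le_iff_ne_zero.mpr ((ZMod.val_ne_zero a).mpr ha)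
    rw [ZMod.val_sub hval, ZMod.val_one]

theorem ZMod.forall_ne_natCast_ne_iff {p : ℕ} [NeZero p] (i : Fin p) (a : ZMod p) :
    (∀ j : Fin p, j ≠ i → (j.val : ZMod p) ≠ a) ↔ (i.val : ZMod p) = a := by
  constructor
  · intro h
    by_contra hi
    refine h ⟨a.val, a.val_lt⟩ (fun hai => hi ?_) (ZMod.natCast_zmod_val a)
    rw [← hai, ZMod.natCast_zmod_val]
  · rintro hi j hji hj
    refine hji (Fin.ext ?_)
    simpa [ZMod.val_cast_of_lt j.2, ZMod.val_cast_of_lt i.2] using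
      congrArg ZMod.val (hj.trans hi.symm)

theorem Function.minimalPeriod_eq_of_forall_isPeriodicPt_iff {α : Type*} {f : α → α} {x : α}
    {k : ℕ} (h : ∀ n, IsPeriodicPt f n x ↔ k ∣ n) : minimalPeriod f x = k :=
  Nat.dvd_right_iff_eq.mp fun n => by rw [← isPeriodicPt_iff_minimalPeriod_dvd, h]

section FiringMemory

variable {V : Type*}

def configOfDelay (δ : V → ℕ) : V → Bool × ℕ := fun i => (decide (1 ≤ δ i), δ i)

theorem configOfDelay_injective : Function.Injective (configOfDelay (V := V)) :=
  fun _ _ h => funext fun i => congrArg Prod.snd (congrFun h i)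

open Classical in
noncomputable def delayStep (G : SimpleGraph V) (dt δ : V → ℕ) : V → ℕ :=
  fun i => if ∀ j, G.Adj i j → 1 ≤ δ j then dt i else δ i - 1

variable [Fintype V] {W : Type*} [Fintype W]

theorem conjNet_comap_equiv (e : W ≃ V) (G : SimpleGraph V) (x : V → Bool) :
    conjNet (G.comap e) (x ∘ e) = conjNet G x ∘ e := by
  funext i
  simp only [conjNet, SimpleGraph.comap_adj, Function.comp_apply]
  congr 1
  exact propext (e.forall_congr_right (q := fun j => G.Adj (e i) j → x j = true))

theorem fmStep_comap_equiv (e : W ≃ V) (G : SimpleGraph V) (dt : V → ℕ) (y : V → Bool × ℕ) :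
    fmStep (G.comap e) (dt ∘ e) (y ∘ e) = fmStep G dt y ∘ e := by
  have hconj := conjNet_comap_equiv e G (fun j => (y j).1)
  funext i
  simp only [fmStep, Function.comp_apply]
  rw [show (fun j => (y (e j)).1) = (fun j => (y j).1) ∘ e from rfl, hconj]
  rfl

theorem minimalPeriod_fmStep_comap_equiv (e : W ≃ V) (G : SimpleGraph V) (dt : V → ℕ)
    (y : V → Bool × ℕ) :
    Function.minimalPeriod (fmStep (G.comap e) (dt ∘ e)) (y ∘ e) =
      Function.minimalPeriod (fmStep G dt) y := by
  have hsemi : Function.Semiconj (· ∘ e) (fmStep G dt) (fmStep (G.comap e) (dt ∘ e)) :=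
    fun y => (fmStep_comap_equiv e G dt y).symm
  refine Function.minimalPeriod_eq_minimalPeriod_iff.mpr fun n => ?_
  simp only [Function.IsPeriodicPt, Function.IsFixedPt, ← hsemi.iterate_right n y]
  exact e.surjective.injective_comp_right.eq_iff

theorem conjNet_decide_eq_true_iff (G : SimpleGraph V) (δ : V → ℕ) (i : V) :
    conjNet G (fun j => decide (1 ≤ δ j)) i = true ↔ ∀ j, G.Adj i j → 1 ≤ δ j := by
  simp only [conjNet, decide_eq_true_eq]
  split_ifs <;> simp_all

theorem fmStep_configOfDelay {G : SimpleGraph V} {dt : V → ℕ} (hdt : ∀ i, 1 ≤ dt i)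
    (δ : V → ℕ) : fmStep G dt (configOfDelay δ) = configOfDelay (delayStep G dt δ) := by
  funext i
  have hF := conjNet_decide_eq_true_iff G δ i
  simp only [fmStep, configOfDelay, delayStep]
  by_cases h : ∀ j, G.Adj i j → 1 ≤ δ j
  · simp [if_pos h, hF.mpr h, hdt i]
  · simp [if_neg h, Bool.eq_false_iff.mpr (mt hF.mp h)]

theorem isPeriodicPt_fmStep_configOfDelay_iff {G : SimpleGraph V} {dt : V → ℕ}
    (hdt : ∀ i, 1 ≤ dt i) {δ : ℕ → V → ℕ} (hδ : ∀ t, delayStep G dt (δ t) = δ (t + 1))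
    (n : ℕ) : Function.IsPeriodicPt (fmStep G dt) n (configOfDelay (δ 0)) ↔ δ n = δ 0 := by
  have orbit : ∀ t, (fmStep G dt)^[t] (configOfDelay (δ 0)) = configOfDelay (δ t) := by
    intro t
    induction t with
    | zero => rfl
    | succ t ih => rw [Function.iterate_succ_apply', ih, fmStep_configOfDelay hdt, hδ]
  rw [Function.IsPeriodicPt, Function.IsFixedPt, orbit, configOfDelay_injective.eq_iff]

end FiringMemory

section PendantCliques

variable (P : Finset ℕ)

/-- `⟨p, none⟩` is the pendant of block `p` and `⟨p, some i⟩` its clique vertex `cᵢ`. -/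
abbrev PendantCliques := Σ p : P, Option (Fin p)

def pendantCliqueRel : PendantCliques P → PendantCliques P → Prop
  | ⟨_, none⟩, ⟨_, none⟩ => True
  | ⟨p, none⟩, ⟨q, some j⟩ => p = q ∧ j.val = 0
  | ⟨p, some _⟩, ⟨q, some _⟩ => p = q
  | ⟨_, some _⟩, ⟨_, none⟩ => False

def pendantCliqueGraph : SimpleGraph (PendantCliques P) :=
  SimpleGraph.fromRel (pendantCliqueRel P)

def pendantCliqueDt : PendantCliques P → ℕ
  | ⟨p, none⟩ => p
  | ⟨p, some _⟩ => p - 1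

def pendantCliqueDelay (t : ℕ) : PendantCliques P → ℕ
  | ⟨p, none⟩ => if (t : ZMod p) = 1 then p - 1 else p
  | ⟨p, some i⟩ => ((i.val : ZMod p) - t).val

theorem card_pendantCliques :
    Fintype.card (PendantCliques P) = ∑ p ∈ P, (p + 1) := by
  simp only [Fintype.card_sigma, Fintype.card_option, Fintype.card_fin]
  exact Finset.sum_coe_sort P (· + 1)

variable {P}

theorem pendantCliqueGraph_adj_none_none {p q : P} :
    (pendantCliqueGraph P).Adj ⟨p, none⟩ ⟨q, none⟩ ↔ p ≠ q := by
  rw [pendantCliqueGraph, SimpleGraph.fromRel_adj]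
  constructor
  · rintro ⟨hne, -⟩ rfl
    exact hne rfl
  · exact fun hpq => ⟨fun h => hpq (congrArg Sigma.fst h), Or.inl trivial⟩

theorem pendantCliqueGraph_adj_none_some {p q : P} {j : Fin q} :
    (pendantCliqueGraph P).Adj ⟨p, none⟩ ⟨q, some j⟩ ↔ p = q ∧ j.val = 0 := by
  rw [pendantCliqueGraph, SimpleGraph.fromRel_adj]
  constructor
  · rintro ⟨-, h | h⟩
    exacts [h, h.elim]
  · refine fun h => ⟨fun he => ?_, Or.inl h⟩
    obtain ⟨rfl, hj⟩ := Sigma.mk.inj_iff.mp he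
    simp at hj

theorem pendantCliqueGraph_adj_some_some {p q : P} {i : Fin p} {j : Fin q} :
    (pendantCliqueGraph P).Adj ⟨p, some i⟩ ⟨q, some j⟩ ↔
      p = q ∧ (⟨p, some i⟩ : PendantCliques P) ≠ ⟨q, some j⟩ := by
  simp [pendantCliqueGraph, pendantCliqueRel, and_comm, eq_comm]

theorem forall_adj_pendant_iff {f : PendantCliques P → Prop} (hf : ∀ q, f ⟨q, none⟩) {p : P}
    (hp : 0 < (p : ℕ)) :
    (∀ w, (pendantCliqueGraph P).Adj ⟨p, none⟩ w → f w) ↔ f ⟨p, some ⟨0, hp⟩⟩ := by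
  refine ⟨fun h => h _ (pendantCliqueGraph_adj_none_some.mpr ⟨rfl, rfl⟩), ?_⟩
  rintro h0 ⟨q, _ | j⟩ hadj
  · exact hf q
  · obtain ⟨rfl, hj⟩ := pendantCliqueGraph_adj_none_some.mp hadj
    rwa [show j = ⟨0, hp⟩ from Fin.ext hj]

theorem forall_adj_clique_iff {f : PendantCliques P → Prop} (hf : ∀ q, f ⟨q, none⟩) {p : P}
    (i : Fin p) :
    (∀ w, (pendantCliqueGraph P).Adj ⟨p, some i⟩ w → f w) ↔ ∀ j, j ≠ i → f ⟨p, some j⟩ := by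
  constructor
  · intro h j hji
    exact h _ (pendantCliqueGraph_adj_some_some.mpr ⟨rfl, by simpa [eq_comm] using hji⟩)
  · rintro h ⟨q, _ | j⟩ hadj
    · exact hf q
    · obtain ⟨rfl, hne⟩ := pendantCliqueGraph_adj_some_some.mp hadj
      exact h j (by simpa [eq_comm] using hne)

theorem pendantCliqueGraph_connected (hP : P.Nonempty) : (pendantCliqueGraph P).Connected := by
  obtain ⟨p₀, hp₀⟩ := hP
  have reach_pendant : ∀ v : PendantCliques P,
      (pendantCliqueGraph P).Reachable ⟨⟨p₀, hp₀⟩, none⟩ ⟨v.1, none⟩ := by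
    intro v
    by_cases h : (⟨p₀, hp₀⟩ : P) = v.1
    · rw [h]
    · exact (pendantCliqueGraph_adj_none_none.mpr h).reachable
  refine (SimpleGraph.connected_iff_exists_forall_reachable _).mpr ⟨⟨⟨p₀, hp₀⟩, none⟩, ?_⟩
  rintro ⟨q, _ | j⟩
  · exact reach_pendant ⟨q, none⟩
  have hq : 0 < (q : ℕ) := j.pos
  have to_zero : (pendantCliqueGraph P).Reachable ⟨q, none⟩ ⟨q, some ⟨0, hq⟩⟩ :=
    (pendantCliqueGraph_adj_none_some.mpr ⟨rfl, rfl⟩).reachable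
  refine (reach_pendant ⟨q, none⟩).trans (to_zero.trans ?_)
  by_cases hj : j = ⟨0, hq⟩
  · rw [hj]
  · exact (pendantCliqueGraph_adj_some_some.mpr ⟨rfl, by simpa [eq_comm] using hj⟩).reachable

variable (hP : ∀ p ∈ P, 2 ≤ p)
include hP

theorem one_le_pendantCliqueDt (v : PendantCliques P) : 1 ≤ pendantCliqueDt P v := by
  obtain ⟨⟨p, hp⟩, _ | _⟩ := v <;> simp only [pendantCliqueDt] <;> have := hP p hp <;> omega

theorem one_le_pendantCliqueDelay_pendant (t : ℕ) (p : P) :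
    1 ≤ pendantCliqueDelay P t ⟨p, none⟩ := by
  have := hP _ p.2
  simp only [pendantCliqueDelay]
  split_ifs <;> omega

theorem delayStep_pendantCliqueDelay (t : ℕ) :
    delayStep (pendantCliqueGraph P) (pendantCliqueDt P) (pendantCliqueDelay P t) =
      pendantCliqueDelay P (t + 1) := by
  funext ⟨p, v⟩
  have hp := hP _ p.2
  have : NeZero (p : ℕ) := ⟨by omega⟩
  have : Fact (1 < (p : ℕ)) := ⟨hp⟩
  cases v with
  | none =>
    rw [delayStep, forall_adj_pendant_iff (one_le_pendantCliqueDelay_pendant hP t) (by omega)]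
    by_cases ht : (t : ZMod p) = 0 <;> simp [pendantCliqueDelay, pendantCliqueDt, ht]
  | some i =>
    have hole : (∀ j : Fin p, j ≠ i → 1 ≤ ((j.val : ZMod p) - t).val) ↔ (i.val : ZMod p) = t := by
      simp only [Nat.one_le_iff_ne_zero, ne_eq, ZMod.val_eq_zero, sub_eq_zero]
      exact ZMod.forall_ne_natCast_ne_iff i _
    rw [delayStep, forall_adj_clique_iff (one_le_pendantCliqueDelay_pendant hP t)]
    simp only [pendantCliqueDelay, pendantCliqueDt, hole]
    rw [Nat.cast_succ, ← sub_sub, ZMod.val_sub_one]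
    simp only [sub_eq_zero]

theorem pendantCliqueDelay_eq_pendantCliqueDelay_zero_iff (n : ℕ) :
    pendantCliqueDelay P n = pendantCliqueDelay P 0 ↔ ∀ p ∈ P, p ∣ n := by
  constructor
  · intro h p hp
    have : NeZero p := ⟨by linarith [hP p hp]⟩
    have h0 := congrFun h ⟨⟨p, hp⟩, some ⟨0, Nat.pos_of_neZero p⟩⟩
    simpa [pendantCliqueDelay, ZMod.natCast_eq_zero_iff] using h0
  · intro h
    funext ⟨⟨p, hp⟩, v⟩
    have hn : (n : ZMod p) = 0 := (ZMod.natCast_eq_zero_iff n p).mpr (h p hp)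
    cases v <;> simp [pendantCliqueDelay, hn]

theorem minimalPeriod_fmStep_pendantClique :
    Function.minimalPeriod (fmStep (pendantCliqueGraph P) (pendantCliqueDt P))
      (configOfDelay (pendantCliqueDelay P 0)) = P.lcm id := by
  refine Function.minimalPeriod_eq_of_forall_isPeriodicPt_iff fun n => ?_
  rw [isPeriodicPt_fmStep_configOfDelay_iff (one_le_pendantCliqueDt hP)
    (delayStep_pendantCliqueDelay hP), pendantCliqueDelay_eq_pendantCliqueDelay_zero_iff hP,
    Finset.lcm_dvd_iff]
  rfl

end PendantCliques

/-- for every `m ≥ 2`, with `n = Σ_{p prime, p ≤ m} (p + 1)`,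
there are a connected graph on `n` vertices, a maximum delay vector `dt`
(not necessarily constant, with `dtᵢ ≥ 1`) and a periodic configuration whose
minimal period is at least `Π_{p prime, p ≤ m} p`. -/
theorem connected_primorial_period (m : ℕ) (hm : 2 ≤ m) :
    ∃ (G : SimpleGraph (Fin (∑ p ∈ (Finset.range (m + 1)).filter Nat.Prime, (p + 1))))
      (dt : Fin (∑ p ∈ (Finset.range (m + 1)).filter Nat.Prime, (p + 1)) → ℕ)
      (y : Fin (∑ p ∈ (Finset.range (m + 1)).filter Nat.Prime, (p + 1)) → Bool × ℕ),
      G.Connected ∧ (∀ i, 1 ≤ dt i) ∧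
      y ∈ Function.periodicPts (fmStep G dt) ∧
      (∏ p ∈ (Finset.range (m + 1)).filter Nat.Prime, p) ≤
        Function.minimalPeriod (fmStep G dt) y := by
  set P := (Finset.range (m + 1)).filter Nat.Prime
  have hP : ∀ p ∈ P, p.Prime := fun p hp => (Finset.mem_filter.mp hp).2
  have hP2 : ∀ p ∈ P, 2 ≤ p := fun p hp => (hP p hp).two_le
  have h2 : 2 ∈ P := Finset.mem_filter.mpr ⟨Finset.mem_range.mpr (by omega), Nat.prime_two⟩
  have hlcm : 0 < P.lcm id :=
    Nat.pos_of_ne_zero fun h => by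
      obtain ⟨p, hp, hp0⟩ := Finset.lcm_eq_zero_iff.mp h
      exact (hP p hp).ne_zero hp0
  let e := (Fintype.equivFinOfCardEq (card_pendantCliques P)).symm
  have hperiod := (minimalPeriod_fmStep_comap_equiv e _ _ _).trans
    (minimalPeriod_fmStep_pendantClique hP2)
  refine ⟨(pendantCliqueGraph P).comap e, pendantCliqueDt P ∘ e,
    configOfDelay (pendantCliqueDelay P 0) ∘ e,
    (SimpleGraph.Iso.comap e _).connected_iff.mpr (pendantCliqueGraph_connected ⟨2, h2⟩),
    fun i => one_le_pendantCliqueDt hP2 (e i), ?_, ?_⟩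
  · rwa [← Function.minimalPeriod_pos_iff_mem_periodicPts, hperiod]
  · rw [hperiod]
    exact Nat.le_of_dvd hlcm
      (Finset.prod_primes_dvd _ (fun p hp => (hP p hp).prime) fun p hp => Finset.dvd_lcm hp)
end

section
/- Let τ ≥ 2 and m ≥ 2, and let P be the set of prime numbers p with p ≤ m. There exist a finite simple graph G and a configuration y of the conjunctive network with firing memory on G with uniform maximum delay dt_i = τ at every node, such that y is periodic and its minimal period is at least Π_{p ∈ P} p. -/
/-!
Glue a cycle `ZMod k`, with `τ + 1 ∣ k`, to a clique `ZMod (τ + 1)` acting as a clock: at every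
time exactly one clock node has delay `0`, so exactly that node fires and the zero runs round the
clique. Cycle node `c` is joined to every clock node except `φ c` and `φ c + 1`, where `φ` is
reduction mod `τ + 1`, so it can fire only in step with the clock. In the configuration we start
from, the cycle follows the clock except for one defect, which advances by one cycle node every `τ`
steps: `Φ^τ y₀ = y₀ ∘ σ` for the rotation automorphism `σ : (c, j) ↦ (c + 1, j + 1)`. Hence
`Φ^(τ s) y₀ = y₀ ∘ σ^s`, so `y₀` is periodic, and a period `p` makes `σ^p` fix `y₀`, which pins the
defect and forces `k ∣ p`. Take `k = (τ + 1) · ∏ p`.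
-/

open Function

theorem Function.Semiconj.minimalPeriod_eq {α β : Type*} {fa : α → α} {fb : β → β} {g : α → β}
    (hg : Semiconj g fa fb) (hinj : Injective g) (x : α) :
    minimalPeriod fb (g x) = minimalPeriod fa x :=
  minimalPeriod_eq_minimalPeriod_iff.mpr fun n =>
    ⟨fun h => hinj <| (hg.iterate_right n x).trans h, fun h => h.map hg⟩

theorem ZMod.one_ne_zero_of_dvd {m n : ℕ} (h : m ∣ n) (hm : m ≠ 1) : (1 : ZMod n) ≠ 0 :=
  have : Nontrivial (ZMod n) := ZMod.nontrivial_iff.mpr fun hn => hm (Nat.dvd_one.mp (hn ▸ h))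
  one_ne_zero

theorem ZMod.two_ne_zero_of_two_le {n : ℕ} (hn : 2 ≤ n) : (2 : ZMod (n + 1)) ≠ 0 := by
  exact_mod_cast (ZMod.natCast_eq_zero_iff 2 (n + 1)).not.mpr
    (Nat.not_dvd_of_pos_of_lt two_pos (by omega))

theorem ZMod.natCast_ne_neg_one {n t : ℕ} (ht : t < n) : (t : ZMod (n + 1)) ≠ -1 := by
  intro h
  have := congrArg ZMod.val h
  rw [ZMod.val_natCast_of_lt (by omega), ZMod.val_neg_one] at this
  omega

theorem ZMod.val_sub_one_of_ne_zero {n : ℕ} [NeZero n] {a : ZMod n} (ha : a ≠ 0) :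
    (a - 1).val = a.val - 1 := by
  have hn : n ≠ 1 := ZMod.nontrivial_iff.mp ⟨⟨a, 0, ha⟩⟩
  have hval : 1 ≤ a.val := Nat.one_le_iff_ne_zero.mpr ((ZMod.val_ne_zero a).mpr ha)
  rw [ZMod.val_sub (by rwa [ZMod.val_one'' hn]), ZMod.val_one'' hn]

theorem ZMod.val_sub_natCast_succ {n : ℕ} (a : ZMod (n + 1)) (t : ℕ) :
    (a - (t + 1 : ℕ)).val = if a = t then n else (a - t).val - 1 := by
  rw [Nat.cast_succ, ← sub_sub]
  split_ifs with h
  · rw [h, sub_self, zero_sub, ZMod.val_neg_one]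
  · exact ZMod.val_sub_one_of_ne_zero (sub_ne_zero.mpr h)

section FiringMemory

variable {V W : Type*} [Fintype V] [Fintype W]

theorem conjNet_eq_true_iff (G : SimpleGraph V) (x : V → Bool) (i : V) :
    conjNet G x i = true ↔ ∀ j, G.Adj i j → x j = true := by
  unfold conjNet
  split <;> simp_all

theorem conjNet_comp_iso {G : SimpleGraph V} {H : SimpleGraph W} (e : H ≃g G) (x : V → Bool)
    (i : W) : conjNet H (x ∘ e) i = conjNet G x (e i) := by
  rw [Bool.eq_iff_iff, conjNet_eq_true_iff, conjNet_eq_true_iff]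
  exact e.toEquiv.forall_congr fun j => imp_congr e.map_adj_iff.symm Iff.rfl

theorem semiconj_fmStep_iso {G : SimpleGraph V} {H : SimpleGraph W} (e : H ≃g G) (dt : V → ℕ) :
    Semiconj (fun y : V → Bool × ℕ => y ∘ e) (fmStep G dt) (fmStep H (dt ∘ e)) := fun y => by
  funext i
  simp only [fmStep, Function.comp_apply, ← conjNet_comp_iso e]
  rfl

theorem iterate_fmStep_const_comp_aut {G : SimpleGraph V} (e : G ≃g G) (τ n : ℕ)
    (y : V → Bool × ℕ) :
    (fmStep G fun _ => τ)^[n] (y ∘ e) = (fmStep G fun _ => τ)^[n] y ∘ e :=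
  ((semiconj_fmStep_iso e fun _ => τ).iterate_right n y).symm

theorem exists_fin_minimalPeriod_fmStep_eq (G : SimpleGraph V) (τ : ℕ) (y : V → Bool × ℕ) :
    ∃ (n : ℕ) (H : SimpleGraph (Fin n)) (z : Fin n → Bool × ℕ),
      minimalPeriod (fmStep H fun _ => τ) z = minimalPeriod (fmStep G fun _ => τ) y := by
  let e := SimpleGraph.Iso.comap (Fintype.equivFin V).symm G
  refine ⟨_, _, y ∘ e, (semiconj_fmStep_iso e fun _ => τ).minimalPeriod_eq ?_ y⟩
  exact fun y₁ y₂ h => funext fun v => by simpa [e] using congrFun h ((Fintype.equivFin V) v)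

def delayConfig (d : V → ℕ) : V → Bool × ℕ := fun i => (decide (d i ≠ 0), d i)

def Fires (G : SimpleGraph V) (d : V → ℕ) (i : V) : Prop := ∀ j, G.Adj i j → d j ≠ 0

open Classical in
theorem fmStep_delayConfig (G : SimpleGraph V) {dt : V → ℕ} (hdt : ∀ i, dt i ≠ 0) (d : V → ℕ) :
    fmStep G dt (delayConfig d) = delayConfig fun i => if Fires G d i then dt i else d i - 1 := by
  funext i
  have hF : conjNet G (fun j => (delayConfig d j).1) i = decide (Fires G d i) := by
    rw [Bool.eq_iff_iff, conjNet_eq_true_iff, decide_eq_true_iff]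
    simp [delayConfig, Fires]
  simp only [fmStep, hF, decide_eq_true_eq]
  by_cases hfire : Fires G d i
  · simp only [delayConfig, if_pos hfire, if_pos (Nat.one_le_iff_ne_zero.mpr (hdt i)),
      decide_eq_true (hdt i)]
  · simp only [delayConfig, if_neg hfire, Nat.one_le_iff_ne_zero]
    split_ifs with h <;> simp_all

end FiringMemory

namespace CycleClock

abbrev Node (τ k : ℕ) := ZMod k ⊕ ZMod (τ + 1)

variable {τ k : ℕ} (hdvd : τ + 1 ∣ k)

def phase : ZMod k →+* ZMod (τ + 1) := ZMod.castHom hdvd _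

def edge : Node τ k → Node τ k → Prop
  | .inl c, .inl c' => c' = c + 1
  | .inl c, .inr j => j ≠ phase hdvd c ∧ j ≠ phase hdvd c + 1
  | .inr _, .inr _ => True
  | .inr _, .inl _ => False

def graph : SimpleGraph (Node τ k) := SimpleGraph.fromRel (edge hdvd)

def shift (a : ZMod k) : graph hdvd ≃g graph hdvd where
  toEquiv := Equiv.sumCongr (Equiv.addRight a) (Equiv.addRight (phase hdvd a))
  map_rel_iff' := by
    rintro (c | j) (c' | j') <;>
      simp [graph, edge, add_right_comm _ a, add_right_comm _ (phase hdvd a)]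

/-- The delays `t ≤ τ` steps after the start: clock node `j` and cycle node `c` are `j - t` and
`φ c - t` (mod `τ + 1`) steps from `0`, except for the defect: cycle node `0` is held at `1` at
time `0`, and node `-1`, which fires out of phase at time `0`, runs one step behind its phase. -/
def delay (t : ℕ) : Node τ k → ℕ
  | .inl c =>
      if c = 0 ∧ t = 0 then 1 else if c = -1 ∧ t ≠ 0 then τ + 1 - t else (phase hdvd c - t).val
  | .inr j => (j - t).val

variable {hdvd}

@[simp]
theorem graph_adj_inl_inl {c c' : ZMod k} :
    (graph hdvd).Adj (.inl c) (.inl c') ↔ c ≠ c' ∧ (c' = c + 1 ∨ c = c' + 1) := by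
  simp [graph, edge]

@[simp]
theorem graph_adj_inl_inr {c : ZMod k} {j : ZMod (τ + 1)} :
    (graph hdvd).Adj (.inl c) (.inr j) ↔ j ≠ phase hdvd c ∧ j ≠ phase hdvd c + 1 := by
  simp [graph, edge]

@[simp]
theorem graph_adj_inr_inl {c : ZMod k} {j : ZMod (τ + 1)} :
    (graph hdvd).Adj (.inr j) (.inl c) ↔ j ≠ phase hdvd c ∧ j ≠ phase hdvd c + 1 := by
  simp [graph, edge]

@[simp]
theorem graph_adj_inr_inr {j j' : ZMod (τ + 1)} :
    (graph hdvd).Adj (.inr j) (.inr j') ↔ j ≠ j' := by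
  simp [graph, edge]

theorem shift_apply_inl (a c : ZMod k) : shift hdvd a (.inl c) = .inl (c + a) := rfl

theorem shift_apply_inr (a : ZMod k) (j : ZMod (τ + 1)) :
    shift hdvd a (.inr j) = .inr (j + phase hdvd a) := rfl

theorem shift_shift (a b : ZMod k) (v : Node τ k) :
    shift hdvd a (shift hdvd b v) = shift hdvd (b + a) v := by
  rcases v with c | j <;> simp [shift_apply_inl, shift_apply_inr, add_assoc]

theorem shift_zero (v : Node τ k) : shift hdvd 0 v = v := by
  rcases v with c | j <;> simp [shift_apply_inl, shift_apply_inr]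

theorem delay_inr_eq_zero_iff {t : ℕ} {j : ZMod (τ + 1)} :
    delay hdvd t (.inr j) = 0 ↔ j = t := by
  simp [delay, sub_eq_zero]

theorem delay_inl_eq_zero_iff {t : ℕ} (ht : t < τ) {c : ZMod k} :
    delay hdvd t (.inl c) = 0 ↔ phase hdvd c = t ∧ (c = 0 → t ≠ 0) := by
  simp only [delay]
  split_ifs with h0 h1
  · simp [h0]
  · simp [h1.1, (ZMod.natCast_ne_neg_one ht).symm]
    omega
  · simp_all [sub_eq_zero]

theorem delay_zero_inl_zero : delay hdvd 0 (.inl 0) = 1 := by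
  simp [delay]

theorem delay_zero_inl_of_ne_zero {c : ZMod k} (hc : c ≠ 0) :
    delay hdvd 0 (.inl c) = (phase hdvd c).val := by
  simp [delay, hc]

theorem fires_inr_iff {t : ℕ} (ht : t < τ) {j : ZMod (τ + 1)} :
    Fires (graph hdvd) (delay hdvd t) (.inr j) ↔ j = t := by
  refine ⟨fun h => ?_, ?_⟩
  · by_contra hj
    exact h (.inr t) (graph_adj_inr_inr.mpr hj) (delay_inr_eq_zero_iff.mpr rfl)
  · rintro rfl (c | j') hadj
    · simp only [graph_adj_inr_inl] at hadj
      exact fun h => hadj.1 ((delay_inl_eq_zero_iff ht).mp h).1.symm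
    · exact fun h => graph_adj_inr_inr.mp hadj (delay_inr_eq_zero_iff.mp h).symm

theorem fires_inl_of_phase_eq {t : ℕ} (ht : t < τ) {c : ZMod k} (hc : phase hdvd c = t) :
    Fires (graph hdvd) (delay hdvd t) (.inl c) := by
  have : Fact (1 < τ + 1) := ⟨by omega⟩
  rintro (c' | j) hadj
  · rw [Ne, delay_inl_eq_zero_iff ht, ← hc]
    rintro ⟨h, -⟩
    rcases (graph_adj_inl_inl.mp hadj).2 with rfl | rfl <;> simp at h
  · exact fun h => (graph_adj_inl_inr.mp hadj).1 (by rw [delay_inr_eq_zero_iff.mp h, hc])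

theorem fires_inl_neg_one (hτ : 2 ≤ τ) : Fires (graph hdvd) (delay hdvd 0) (.inl (-1)) := by
  rintro (c | j) hadj
  · rw [Ne, delay_inl_eq_zero_iff (by omega)]
    rcases (graph_adj_inl_inl.mp hadj).2 with rfl | h
    · simp
    · rintro ⟨h2, -⟩
      rw [show c = -2 by linear_combination -h, map_neg, map_ofNat, Nat.cast_zero, neg_eq_zero]
        at h2
      exact ZMod.two_ne_zero_of_two_le hτ h2
  · exact fun h => (graph_adj_inl_inr.mp hadj).2 (by simp [delay_inr_eq_zero_iff.mp h])

theorem fires_inl_iff (hτ : 2 ≤ τ) {t : ℕ} (ht : t < τ) {c : ZMod k} :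
    Fires (graph hdvd) (delay hdvd t) (.inl c) ↔ phase hdvd c = t ∨ (c = -1 ∧ t = 0) := by
  refine ⟨fun h => or_iff_not_imp_left.mpr fun hc => ?_, ?_⟩
  · have hclock : (t : ZMod (τ + 1)) = phase hdvd c + 1 := by
      by_contra h'
      exact h (.inr t) (graph_adj_inl_inr.mpr ⟨Ne.symm hc, h'⟩) (delay_inr_eq_zero_iff.mpr rfl)
    have hcycle := h (.inl (c + 1)) <| graph_adj_inl_inl.mpr
      ⟨by simpa using ZMod.one_ne_zero_of_dvd hdvd (by omega), .inl rfl⟩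
    rw [Ne, delay_inl_eq_zero_iff ht, map_add, map_one, ← hclock] at hcycle
    obtain ⟨hc1, ht0⟩ : c + 1 = 0 ∧ t = 0 := by simpa using hcycle
    exact ⟨eq_neg_of_add_eq_zero_left hc1, ht0⟩
  · rintro (hc | ⟨rfl, rfl⟩)
    · exact fires_inl_of_phase_eq ht hc
    · exact fires_inl_neg_one hτ

theorem delay_succ_inr (t : ℕ) (j : ZMod (τ + 1)) :
    delay hdvd (t + 1) (.inr j) = if j = t then τ else delay hdvd t (.inr j) - 1 :=
  ZMod.val_sub_natCast_succ j t

theorem delay_succ_inl {t : ℕ} (ht : t < τ) (c : ZMod k) :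
    delay hdvd (t + 1) (.inl c) =
      if phase hdvd c = t ∨ (c = -1 ∧ t = 0) then τ else delay hdvd t (.inl c) - 1 := by
  have h10 : (1 : ZMod k) ≠ 0 := ZMod.one_ne_zero_of_dvd hdvd (by omega)
  by_cases hc : c = -1
  · subst hc
    have hφ : phase hdvd (-1) ≠ t := by simpa using (ZMod.natCast_ne_neg_one ht).symm
    simp only [delay, neg_eq_zero, h10, false_and, if_false, true_and, hφ, false_or]
    split_ifs <;> omega
  · simp only [delay, hc, false_and, if_false, or_false, Nat.add_one_ne_zero, and_false]
    rw [ZMod.val_sub_natCast_succ]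
    split_ifs with hφ h0
    · rfl
    · simp [h0.1, h0.2] at hφ
    · rfl

open Classical in
theorem delay_succ (hτ : 2 ≤ τ) {t : ℕ} (ht : t < τ) :
    delay hdvd (t + 1) =
      fun v => if Fires (graph hdvd) (delay hdvd t) v then τ else delay hdvd t v - 1 := by
  funext v
  rcases v with c | j
  · simp only [delay_succ_inl ht, fires_inl_iff hτ ht]
  · simp only [delay_succ_inr, fires_inr_iff ht]

theorem delay_tau (hτ : τ ≠ 0) : delay hdvd τ = delay hdvd 0 ∘ shift hdvd 1 := by
  have hcast : (τ : ZMod (τ + 1)) = -1 := eq_neg_of_add_eq_zero_left (ZMod.natCast_self' τ)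
  funext v
  rcases v with c | j
  · by_cases hc : c = -1
    · simp [delay, shift_apply_inl, hc, hτ]
    · have hc' : c + 1 ≠ 0 := fun h => hc (eq_neg_of_add_eq_zero_left h)
      simp [delay, shift_apply_inl, hc, hc', hcast, hτ]
  · simp [delay, shift_apply_inr, hcast]

variable [NeZero k]

theorem fmStep_delayConfig_delay (hτ : 2 ≤ τ) {t : ℕ} (ht : t < τ) :
    fmStep (graph hdvd) (fun _ => τ) (delayConfig (delay hdvd t)) =
      delayConfig (delay hdvd (t + 1)) := by
  rw [fmStep_delayConfig _ (fun _ => by omega), delay_succ hτ ht]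

theorem iterate_fmStep_delayConfig (hτ : 2 ≤ τ) {t : ℕ} (ht : t ≤ τ) :
    (fmStep (graph hdvd) fun _ => τ)^[t] (delayConfig (delay hdvd 0)) =
      delayConfig (delay hdvd t) := by
  induction t with
  | zero => rfl
  | succ t ih =>
    rw [Function.iterate_succ_apply', ih (by omega), fmStep_delayConfig_delay hτ (by omega)]

theorem iterate_tau_mul_fmStep (hτ : 2 ≤ τ) (s : ℕ) :
    (fmStep (graph hdvd) fun _ => τ)^[τ * s] (delayConfig (delay hdvd 0)) =
      delayConfig (delay hdvd 0) ∘ shift hdvd s := by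
  induction s with
  | zero => funext v; simp [shift_zero]
  | succ s ih =>
    rw [mul_add_one, add_comm (τ * s) τ, Function.iterate_add_apply, ih,
      iterate_fmStep_const_comp_aut, iterate_fmStep_delayConfig hτ le_rfl, delay_tau (by omega)]
    funext v
    rw [Nat.cast_succ]
    exact congrArg (delayConfig (delay hdvd 0)) (shift_shift (hdvd := hdvd) 1 s v)

theorem isPeriodicPt_fmStep_delayConfig (hτ : 2 ≤ τ) :
    IsPeriodicPt (fmStep (graph hdvd) fun _ => τ) (τ * k) (delayConfig (delay hdvd 0)) := by
  rw [IsPeriodicPt, IsFixedPt, iterate_tau_mul_fmStep hτ, ZMod.natCast_self]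
  funext v
  simp [shift_zero]

theorem dvd_of_isPeriodicPt_fmStep_delayConfig (hτ : 2 ≤ τ) {p : ℕ}
    (hp : IsPeriodicPt (fmStep (graph hdvd) fun _ => τ) p (delayConfig (delay hdvd 0))) :
    k ∣ p := by
  have hshift : ∀ v, delay hdvd 0 (shift hdvd p v) = delay hdvd 0 v := fun v =>
    congrArg Prod.snd (congrFun ((iterate_tau_mul_fmStep hτ p).symm.trans (hp.const_mul τ)) v)
  rw [← ZMod.natCast_eq_zero_iff]
  by_contra hp0
  have h1 := hshift (.inl 0)
  rw [shift_apply_inl, zero_add, delay_zero_inl_of_ne_zero hp0, delay_zero_inl_zero,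
    ZMod.val_eq_one (by omega)] at h1
  have h2 := hshift (.inl (-p))
  rw [shift_apply_inl, neg_add_cancel, delay_zero_inl_of_ne_zero (neg_ne_zero.mpr hp0),
    delay_zero_inl_zero, eq_comm, ZMod.val_eq_one (by omega), map_neg, h1] at h2
  exact ZMod.two_ne_zero_of_two_le hτ (by linear_combination -h2)

theorem le_minimalPeriod_fmStep_delayConfig (hτ : 2 ≤ τ) :
    k ≤ minimalPeriod (fmStep (graph hdvd) fun _ => τ) (delayConfig (delay hdvd 0)) := by
  have hpos := minimalPeriod_pos_of_mem_periodicPts <| mk_mem_periodicPts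
    (Nat.mul_pos (by omega) (NeZero.pos k)) (isPeriodicPt_fmStep_delayConfig (hdvd := hdvd) hτ)
  exact Nat.le_of_dvd hpos
    (dvd_of_isPeriodicPt_fmStep_delayConfig hτ (isPeriodicPt_minimalPeriod _ _))

end CycleClock

theorem uniform_delay_primorial_period_general (τ : ℕ) (hτ : 2 ≤ τ) (m : ℕ) :
    ∃ (n : ℕ) (G : SimpleGraph (Fin n)) (y : Fin n → Bool × ℕ),
      y ∈ Function.periodicPts (fmStep G (fun _ => τ)) ∧
      (∏ p ∈ (Finset.range (m + 1)).filter Nat.Prime, p) ≤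
        Function.minimalPeriod (fmStep G (fun _ => τ)) y := by
  set P := ∏ p ∈ (Finset.range (m + 1)).filter Nat.Prime, p
  have hP : 0 < P := Finset.prod_pos fun p hp => (Finset.mem_filter.mp hp).2.pos
  have hdvd : τ + 1 ∣ (τ + 1) * P := dvd_mul_right _ _
  have : NeZero ((τ + 1) * P) := ⟨by positivity⟩
  obtain ⟨n, G, y, hy⟩ := exists_fin_minimalPeriod_fmStep_eq (CycleClock.graph hdvd) τ
    (delayConfig (CycleClock.delay hdvd 0))
  have hk := CycleClock.le_minimalPeriod_fmStep_delayConfig (hdvd := hdvd) hτ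
  have hPk : P ≤ (τ + 1) * P := Nat.le_mul_of_pos_left P (by omega)
  refine ⟨n, G, y, ?_, by omega⟩
  rw [← minimalPeriod_pos_iff_mem_periodicPts]
  omega

/-- for every `τ ≥ 2` and `m ≥ 2` there are a graph `G` and a
periodic configuration of the conjunctive network with firing memory on `G`
with uniform maximum delay `τ` whose minimal period is at least
`Π_{p prime, p ≤ m} p`. -/
theorem uniform_delay_primorial_period (τ : ℕ) (hτ : 2 ≤ τ) (m : ℕ) (hm : 2 ≤ m) :
    ∃ (n : ℕ) (G : SimpleGraph (Fin n)) (y : Fin n → Bool × ℕ),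
      y ∈ Function.periodicPts (fmStep G (fun _ => τ)) ∧
      (∏ p ∈ (Finset.range (m + 1)).filter Nat.Prime, p) ≤
        Function.minimalPeriod (fmStep G (fun _ => τ)) y :=
  uniform_delay_primorial_period_general τ hτ m
end
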